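/- arXiv:2010.15760 — 2 statements merged into one kernel-verified Lean document; each statement's English description precedes it below -/
import Mathlib

section
/- Let P be an n×n real stochastic matrix with stationary distribution π, let Φ = diag(π), and let 𝕃 = Φ − (ΦP + PᵀΦ)/2 be the combinatorial Laplacian. Then 𝕃 is positive semidefinite: for every y ∈ ℝⁿ, yᵀ 𝕃 y ≥ 0. -/
open Matrix

/-- The combinatorial Laplacian `𝕃 = Φ − (ΦP + PᵀΦ)/2` is positive
semidefinite: `yᵀ 𝕃 y ≥ 0` for every `y ∈ ℝⁿ`. -/
theorem combinatorial_laplacian_posSemidef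
    (n : ℕ) (P : Matrix (Fin n) (Fin n) ℝ) (π : Fin n → ℝ)
    (hP_nonneg : ∀ u v, 0 ≤ P u v)
    (hP_rowsum : ∀ u, ∑ v, P u v = 1)
    (hπ_nonneg : ∀ u, 0 ≤ π u)
    (hπ_stat : ∀ v, ∑ u, π u * P u v = π v)
    (y : Fin n → ℝ) :
    0 ≤ y ⬝ᵥ (Matrix.diagonal π -
      (2⁻¹ : ℝ) • (Matrix.diagonal π * P + Pᵀ * Matrix.diagonal π)).mulVec y := by
  classical
  set A := ∑ u, ∑ v, π u * P u v * y u ^ 2 with hA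
  set B := ∑ u, ∑ v, π u * P u v * y v ^ 2 with hB
  set C := ∑ u, ∑ v, π u * P u v * (y u * y v) with hC
  have hAeq : A = ∑ u, π u * y u ^ 2 := by
    refine Finset.sum_congr rfl fun u _ => ?_
    rw [← Finset.sum_mul, ← Finset.mul_sum, hP_rowsum u, mul_one]
  have hBeq : B = ∑ u, π u * y u ^ 2 := by
    rw [hB, Finset.sum_comm]
    refine Finset.sum_congr rfl fun v _ => ?_
    rw [← Finset.sum_mul, hπ_stat v]
  have hCsym : ∑ u, ∑ v, π v * P v u * (y u * y v) = C := by
    rw [hC, Finset.sum_comm]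
    exact Finset.sum_congr rfl fun u _ => Finset.sum_congr rfl fun v _ => by ring
  -- the quadratic form equals ∑ π y² − C
  have hQ : y ⬝ᵥ (Matrix.diagonal π -
      (2⁻¹ : ℝ) • (Matrix.diagonal π * P + Pᵀ * Matrix.diagonal π)).mulVec y
      = (∑ u, π u * y u ^ 2) - C := by
    simp only [dotProduct, mulVec, Matrix.sub_apply, Matrix.smul_apply, Matrix.add_apply,
      Matrix.diagonal_mul, Matrix.mul_diagonal, Matrix.transpose_apply,
      Matrix.diagonal_apply, smul_eq_mul]
    have hterm : ∀ u, (∑ v, ((if u = v then π u else 0) -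
        2⁻¹ * (π u * P u v + P v u * π v)) * y v) * y u
        = π u * y u ^ 2 - (2⁻¹ * (∑ v, π u * P u v * (y u * y v))
            + 2⁻¹ * (∑ v, π v * P v u * (y u * y v))) := by
      intro u
      rw [Finset.sum_mul]
      have step : ∀ v, ((if u = v then π u else 0) -
          2⁻¹ * (π u * P u v + P v u * π v)) * y v * y u
          = (if u = v then π u * y u ^ 2 else 0)
            - (2⁻¹ * (π u * P u v * (y u * y v)) + 2⁻¹ * (π v * P v u * (y u * y v))) := by
        intro v
        by_cases h : u = v <;> simp [h] <;> ring
      rw [Finset.sum_congr rfl fun v _ => step v, Finset.sum_sub_distrib,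
        Finset.sum_ite_eq Finset.univ u (fun _ => π u * y u ^ 2),
        Finset.sum_add_distrib, ← Finset.mul_sum, ← Finset.mul_sum]
      simp
    have : ∀ u, y u * ∑ v, ((if u = v then π u else 0) -
        2⁻¹ * (π u * P u v + P v u * π v)) * y v
        = π u * y u ^ 2 - (2⁻¹ * (∑ v, π u * P u v * (y u * y v))
            + 2⁻¹ * (∑ v, π v * P v u * (y u * y v))) := by
      intro u; rw [mul_comm]; exact hterm u
    rw [Finset.sum_congr rfl fun u _ => this u, Finset.sum_sub_distrib,
      Finset.sum_add_distrib, ← Finset.mul_sum, ← Finset.mul_sum, hCsym, ← hC]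
    ring
  -- the sum of squares equals A + B − 2C
  have hS : ∑ u, ∑ v, π u * P u v * (y u - y v) ^ 2 = A + B - 2 * C := by
    have inner : ∀ u, ∑ v, π u * P u v * (y u - y v) ^ 2
        = (∑ v, π u * P u v * y u ^ 2) + (∑ v, π u * P u v * y v ^ 2)
          - 2 * ∑ v, π u * P u v * (y u * y v) := by
      intro u
      rw [Finset.mul_sum, ← Finset.sum_add_distrib, ← Finset.sum_sub_distrib]
      exact Finset.sum_congr rfl fun v _ => by ring
    rw [Finset.sum_congr rfl fun u _ => inner u, Finset.sum_sub_distrib,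
      Finset.sum_add_distrib, hC, Finset.mul_sum]
  have hSnn : 0 ≤ ∑ u, ∑ v, π u * P u v * (y u - y v) ^ 2 := by
    refine Finset.sum_nonneg fun u _ => Finset.sum_nonneg fun v _ => ?_
    have := hπ_nonneg u
    have := hP_nonneg u v
    positivity
  rw [hQ]
  have h1 : (∑ u, π u * y u ^ 2) = A := hAeq.symm
  have h2 : (∑ u, π u * y u ^ 2) = B := hBeq.symm
  rw [hS] at hSnn
  linarith
end

section
/- Let P be an n×n real stochastic matrix with stationary distribution π whose entries are all strictly positive, let Φ = diag(π), and let ℒ = I − (Φ^{1/2} P Φ^{-1/2} + Φ^{-1/2} Pᵀ Φ^{1/2})/2 be the directed-graph Laplacian. Then ℒ is positive semidefinite: for every z ∈ ℝⁿ, zᵀ ℒ z ≥ 0. -/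
/-! With `x = Φ^{-1/2} z`, the quadratic form `zᵀ ℒ z` is the Dirichlet form `⟨x, (I - P) x⟩_π`.
Row sums `1` and stationarity of `π` turn this into `½ ∑ π_u P_uv (x_u - x_v)²`, a sum of
nonnegative terms. -/

open Matrix

variable {ι : Type*} [Fintype ι]

section Dirichlet

variable {R : Type*} [CommRing R]

def dirichletForm (P : Matrix ι ι R) (π x : ι → R) : R :=
  (π * x) ⬝ᵥ (x - P *ᵥ x)

theorem two_mul_dirichletForm_eq_sum_sq {P : Matrix ι ι R} {π : ι → R}
    (hP_rowsum : ∀ u, ∑ v, P u v = 1) (hπ_stat : ∀ v, ∑ u, π u * P u v = π v) (x : ι → R) :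
    2 * dirichletForm P π x = ∑ u, ∑ v, π u * P u v * (x u - x v) ^ 2 := by
  have hleft : ∑ u, ∑ v, π u * P u v * x u ^ 2 = ∑ u, π u * x u ^ 2 := by
    simp only [← Finset.sum_mul, ← Finset.mul_sum, hP_rowsum, mul_one]
  have hright : ∑ u, ∑ v, π u * P u v * x v ^ 2 = ∑ v, π v * x v ^ 2 := by
    rw [Finset.sum_comm]
    simp only [← Finset.sum_mul, hπ_stat]
  have hcross : (π * x) ⬝ᵥ P *ᵥ x = ∑ u, ∑ v, π u * P u v * (x u * x v) := by
    simp only [dotProduct, mulVec, Pi.mul_apply, Finset.mul_sum]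
    exact Finset.sum_congr rfl fun u _ => Finset.sum_congr rfl fun v _ => by ring
  have hexpand : ∑ u, ∑ v, π u * P u v * (x u - x v) ^ 2 =
      ∑ u, ∑ v, π u * P u v * x u ^ 2 + ∑ u, ∑ v, π u * P u v * x v ^ 2
        - 2 * ∑ u, ∑ v, π u * P u v * (x u * x v) := by
    simp only [Finset.mul_sum, ← Finset.sum_add_distrib, ← Finset.sum_sub_distrib]
    exact Finset.sum_congr rfl fun u _ => Finset.sum_congr rfl fun v _ => by ring
  rw [hexpand, hleft, hright, ← hcross, dirichletForm, dotProduct_sub]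
  simp only [dotProduct, Pi.mul_apply, mul_assoc, ← sq]
  ring

theorem dirichletForm_nonneg [LinearOrder R] [IsStrictOrderedRing R] {P : Matrix ι ι R}
    {π : ι → R} (hP_nonneg : ∀ u v, 0 ≤ P u v) (hP_rowsum : ∀ u, ∑ v, P u v = 1)
    (hπ_nonneg : ∀ u, 0 ≤ π u) (hπ_stat : ∀ v, ∑ u, π u * P u v = π v) (x : ι → R) :
    0 ≤ dirichletForm P π x := by
  have h := two_mul_dirichletForm_eq_sum_sq hP_rowsum hπ_stat x
  have : 0 ≤ ∑ u, ∑ v, π u * P u v * (x u - x v) ^ 2 :=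
    Finset.sum_nonneg fun u _ => Finset.sum_nonneg fun v _ =>
      mul_nonneg (mul_nonneg (hπ_nonneg u) (hP_nonneg u v)) (sq_nonneg _)
  linarith

end Dirichlet

namespace Matrix

variable [DecidableEq ι]

theorem transpose_diagonal_mul_mul_diagonal {R : Type*} [CommSemiring R] (d e : ι → R)
    (A : Matrix ι ι R) :
    (diagonal d * A * diagonal e)ᵀ = diagonal e * Aᵀ * diagonal d := by
  rw [transpose_mul, transpose_mul, diagonal_transpose, diagonal_transpose, ← Matrix.mul_assoc]

theorem dotProduct_diagonal_mul_mul_diagonal_mulVec {R : Type*} [CommSemiring R]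
    (d e z w : ι → R) (A : Matrix ι ι R) :
    z ⬝ᵥ (diagonal d * A * diagonal e) *ᵥ w = (d * z) ⬝ᵥ A *ᵥ (e * w) := by
  simp only [dotProduct, mulVec, mul_diagonal, diagonal_mul, Pi.mul_apply, Finset.mul_sum]
  exact Finset.sum_congr rfl fun u _ => Finset.sum_congr rfl fun v _ => by ring

theorem dotProduct_one_sub_half_smul_add_transpose_mulVec {K : Type*} [Field K] [NeZero (2 : K)]
    (A : Matrix ι ι K) (z : ι → K) :
    z ⬝ᵥ (1 - (2⁻¹ : K) • (A + Aᵀ)) *ᵥ z = z ⬝ᵥ z - z ⬝ᵥ A *ᵥ z := by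
  rw [sub_mulVec, dotProduct_sub, one_mulVec, smul_mulVec, dotProduct_smul, add_mulVec,
    dotProduct_add, dotProduct_transpose_mulVec, smul_eq_mul, ← two_mul,
    inv_mul_cancel_left₀ two_ne_zero]

end Matrix

/-- The directed-graph Laplacian
`ℒ = I − (Φ^{1/2} P Φ^{-1/2} + Φ^{-1/2} Pᵀ Φ^{1/2})/2` is positive semidefinite:
`zᵀ ℒ z ≥ 0` for every `z ∈ ℝⁿ`. -/
theorem directed_laplacian_posSemidef
    (n : ℕ) (P : Matrix (Fin n) (Fin n) ℝ) (π : Fin n → ℝ)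
    (hP_nonneg : ∀ u v, 0 ≤ P u v)
    (hP_rowsum : ∀ u, ∑ v, P u v = 1)
    (hπ_pos : ∀ u, 0 < π u)
    (hπ_stat : ∀ v, ∑ u, π u * P u v = π v)
    (z : Fin n → ℝ) :
    0 ≤ z ⬝ᵥ (1 - (2⁻¹ : ℝ) •
        (Matrix.diagonal (fun i => Real.sqrt (π i)) * P *
            Matrix.diagonal (fun i => 1 / Real.sqrt (π i)) +
          Matrix.diagonal (fun i => 1 / Real.sqrt (π i)) * Pᵀ *
            Matrix.diagonal (fun i => Real.sqrt (π i)))).mulVec z := by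
  have hsqrt (i : Fin n) : Real.sqrt (π i) ≠ 0 := (Real.sqrt_pos.mpr (hπ_pos i)).ne'
  have hsq (i : Fin n) : Real.sqrt (π i) * Real.sqrt (π i) = π i :=
    Real.mul_self_sqrt (hπ_pos i).le
  set x : Fin n → ℝ := fun i => z i / Real.sqrt (π i)
  have hleft : (fun i => Real.sqrt (π i)) * z = π * x := by
    ext i
    rw [Pi.mul_apply, Pi.mul_apply, mul_div_assoc', eq_div_iff (hsqrt i), mul_right_comm, hsq]
  have hright : (fun i => 1 / Real.sqrt (π i)) * z = x := by
    ext i; simp only [Pi.mul_apply, x]; field_simp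
  have hnorm : z ⬝ᵥ z = (π * x) ⬝ᵥ x := by
    rw [← hleft, ← hright]
    refine Finset.sum_congr rfl fun i _ => ?_
    rw [Pi.mul_apply, Pi.mul_apply, mul_mul_mul_comm, mul_one_div_cancel (hsqrt i), one_mul]
  rw [← transpose_diagonal_mul_mul_diagonal, dotProduct_one_sub_half_smul_add_transpose_mulVec,
    dotProduct_diagonal_mul_mul_diagonal_mulVec, hleft, hright, hnorm, ← dotProduct_sub]
  exact dirichletForm_nonneg hP_nonneg hP_rowsum (fun u => (hπ_pos u).le) hπ_stat x
end
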